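/- arXiv:1911.03132 — 3 statements merged into one kernel-verified Lean document; each statement's English description precedes it below -/
import Mathlib

section
/- Let {v_k}, {b_k}, {u_k}, {c_k} be sequences of nonnegative reals satisfying v_{k+1} ≤ (1+b_k) v_k − u_k + c_k for all k, with ∑_{k} b_k < ∞ and ∑_{k} c_k < ∞. Then the sequence {v_k} converges to some limit v ≥ 0 and ∑_{k} u_k < ∞. -/
open Filter Topology

theorem stmt0 (v b u c : ℕ → ℝ)
    (hv : ∀ k, 0 ≤ v k) (hb : ∀ k, 0 ≤ b k) (hu : ∀ k, 0 ≤ u k) (hc : ∀ k, 0 ≤ c k)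
    (hrec : ∀ k, v (k + 1) ≤ (1 + b k) * v k - u k + c k)
    (hbsum : Summable b) (hcsum : Summable c) :
    (∃ vlim : ℝ, 0 ≤ vlim ∧ Tendsto v atTop (𝓝 vlim)) ∧ Summable u := by
  classical
  set P : ℕ → ℝ := fun k => ∏ j ∈ Finset.range k, (1 + b j) with hPdef
  have hP1 : ∀ k, 1 ≤ P k := by
    intro k
    simp only [hPdef]
    calc (1:ℝ) = ∏ j ∈ Finset.range k, 1 := by simp
      _ ≤ ∏ j ∈ Finset.range k, (1 + b j) :=
          Finset.prod_le_prod (fun j _ => zero_le_one) (fun j _ => by linarith [hb j])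
  have hPpos : ∀ k, 0 < P k := fun k => lt_of_lt_of_le one_pos (hP1 k)
  have hPne : ∀ k, P k ≠ 0 := fun k => ne_of_gt (hPpos k)
  have hPsucc : ∀ k, P (k + 1) = P k * (1 + b k) := by
    intro k
    simp [hPdef, Finset.prod_range_succ]
  set E : ℝ := Real.exp (∑' j, b j) with hEdef
  have hPle : ∀ k, P k ≤ E := by
    intro k
    calc P k ≤ ∏ j ∈ Finset.range k, Real.exp (b j) := by
          apply Finset.prod_le_prod
          · intro j _; linarith [hb j]
          · intro j _; linarith [Real.add_one_le_exp (b j)]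
      _ = Real.exp (∑ j ∈ Finset.range k, b j) := by
          rw [Real.exp_sum]
      _ ≤ E := by
          apply Real.exp_le_exp.mpr
          exact Summable.sum_le_tsum _ (fun j _ => hb j) hbsum
  have hPmono : Monotone P := by
    apply monotone_nat_of_le_succ
    intro k
    rw [hPsucc]
    nlinarith [hPpos k, hb k]
  -- P converges
  have hPbdd : BddAbove (Set.range P) := ⟨E, by rintro x ⟨k, rfl⟩; exact hPle k⟩
  have hPtend : Tendsto P atTop (𝓝 (⨆ k, P k)) := tendsto_atTop_ciSup hPmono hPbdd
  set L : ℝ := ⨆ k, P k with hLdef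
  have hL0 : (0:ℝ) ≤ L := le_trans zero_le_one (ge_of_tendsto' hPtend hP1)
  -- normalized sequence
  set w : ℕ → ℝ := fun k => v k / P k with hwdef
  have hw0 : ∀ k, 0 ≤ w k := fun k => div_nonneg (hv k) (le_of_lt (hPpos k))
  have hwrec : ∀ k, w (k + 1) ≤ w k - u k / P (k + 1) + c k := by
    intro k
    have hpos := hPpos (k + 1)
    have h1 : v (k + 1) ≤ (1 + b k) * v k - u k + c k * P (k + 1) := by
      nlinarith [hc k, hP1 (k + 1), hrec k]
    have h2 : w k - u k / P (k + 1) + c k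
        = ((1 + b k) * v k - u k + c k * P (k + 1)) / P (k + 1) := by
      have hbne : (1 + b k) ≠ 0 := by nlinarith [hb k]
      have hXne : P k * (1 + b k) ≠ 0 := mul_ne_zero (hPne k) hbne
      have e1 : ((1 + b k) * v k) / (P k * (1 + b k)) = v k / P k := by
        rw [mul_comm (P k) (1 + b k), mul_div_mul_left _ _ hbne]
      have e2 : (c k * (P k * (1 + b k))) / (P k * (1 + b k)) = c k :=
        mul_div_cancel_right₀ _ hXne
      rw [hPsucc, add_div, sub_div, e1, e2]
    have : w (k + 1) = v (k + 1) / P (k + 1) := rfl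
    rw [this, h2]
    exact (div_le_div_iff_of_pos_right hpos).mpr h1
  set S : ℕ → ℝ := fun k => ∑ j ∈ Finset.range k, c j with hSdef
  set U : ℕ → ℝ := fun k => ∑ j ∈ Finset.range k, u j / P (j + 1) with hUdef
  set s : ℕ → ℝ := fun k => w k + U k - S k with hsdef
  have hU0 : ∀ k, 0 ≤ U k := by
    intro k
    apply Finset.sum_nonneg
    intro j _
    exact div_nonneg (hu j) (le_of_lt (hPpos (j + 1)))
  have hSle : ∀ k, S k ≤ ∑' j, c j := fun k => Summable.sum_le_tsum _ (fun j _ => hc j) hcsum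
  have hs_anti : Antitone s := by
    apply antitone_nat_of_succ_le
    intro k
    have h1 := hwrec k
    have hU : U (k + 1) = U k + u k / P (k + 1) := by
      simp [hUdef, Finset.sum_range_succ]
    have hS : S (k + 1) = S k + c k := by
      simp [hSdef, Finset.sum_range_succ]
    simp only [hsdef]
    rw [hU, hS]
    linarith
  have hs_bdd : ∀ k, -(∑' j, c j) ≤ s k := by
    intro k
    have := hw0 k
    have := hU0 k
    have := hSle k
    simp only [hsdef]
    linarith
  have hsBddBelow : BddBelow (Set.range s) :=
    ⟨-(∑' j, c j), by rintro x ⟨k, rfl⟩; exact hs_bdd k⟩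
  have hstend : Tendsto s atTop (𝓝 (⨅ k, s k)) := tendsto_atTop_ciInf hs_anti hsBddBelow
  -- summability of u j / P (j+1)
  have hUsum : Summable (fun j => u j / P (j + 1)) := by
    apply summable_of_sum_range_le (fun j => div_nonneg (hu j) (le_of_lt (hPpos (j + 1))))
    intro k
    have h1 : s k ≤ s 0 := hs_anti (Nat.zero_le k)
    have h2 := hw0 k
    have h3 := hSle k
    have : U k = s k - w k + S k := by simp [hsdef]; ring
    calc ∑ j ∈ Finset.range k, u j / P (j + 1) = U k := rfl
      _ ≤ s 0 + ∑' j, c j := by rw [this]; linarith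
  have husum : Summable u := by
    apply Summable.of_nonneg_of_le hu (fun j => ?_) (hUsum.mul_right E)
    have : u j / P (j + 1) * P (j + 1) = u j := div_mul_cancel₀ _ (hPne (j + 1))
    calc u j = u j / P (j + 1) * P (j + 1) := this.symm
      _ ≤ u j / P (j + 1) * E := by
          apply mul_le_mul_of_nonneg_left (hPle (j + 1))
          exact div_nonneg (hu j) (le_of_lt (hPpos (j + 1)))
  refine ⟨?_, husum⟩
  -- convergence of v
  have hUtend : Tendsto U atTop (𝓝 (∑' j, u j / P (j + 1))) :=
    hUsum.hasSum.tendsto_sum_nat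
  have hStend : Tendsto S atTop (𝓝 (∑' j, c j)) := hcsum.hasSum.tendsto_sum_nat
  have hwtend : Tendsto w atTop
      (𝓝 ((⨅ k, s k) - (∑' j, u j / P (j + 1)) + (∑' j, c j))) := by
    have : w = fun k => s k - U k + S k := by
      funext k; simp [hsdef]; ring
    rw [this]
    exact ((hstend.sub hUtend).add hStend)
  set wlim : ℝ := (⨅ k, s k) - (∑' j, u j / P (j + 1)) + (∑' j, c j) with hwlimdef
  have hwlim0 : 0 ≤ wlim := ge_of_tendsto' hwtend hw0
  refine ⟨wlim * L, mul_nonneg hwlim0 hL0, ?_⟩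
  have : v = fun k => w k * P k := by
    funext k
    simp [hwdef]
    field_simp [hPne k]
  rw [this]
  exact hwtend.mul hPtend
end

section
/- Let {α_k}_{k≥1} be a nonincreasing sequence with α_k ∈ (0,1], ∑_{k=1}^∞ α_k = ∞, and ∑_{k=1}^∞ α_k α_{⌊k/2⌋} < ∞. Let {s_k} be a nonnegative sequence such that ∑_{k=1}^∞ α_k s_k < ∞ and such that s_{k+1} ≤ s_k + C α_k α_{⌊k/2⌋} for all k and some constant C > 0. Then s_k → 0. -/
open Filter Topology

theorem stmt16 (α s : ℕ → ℝ) (C : ℝ) (hC : 0 < C)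
    (hα : ∀ k, α k ∈ Set.Ioc (0 : ℝ) 1) (hmono : Antitone α)
    (hdiv : ¬ Summable α)
    (hsum2 : Summable (fun k => α k * α (k / 2)))
    (hs : ∀ k, 0 ≤ s k)
    (hαs : Summable (fun k => α k * s k))
    (hrec : ∀ k, s (k + 1) ≤ s k + C * α k * α (k / 2)) :
    Tendsto s atTop (𝓝 0) := by
  set e : ℕ → ℝ := fun k => C * α k * α (k / 2) with he
  have henn : ∀ k, 0 ≤ e k := fun k =>
    mul_nonneg (mul_nonneg hC.le (hα k).1.le) (hα (k/2)).1.le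
  have hesum : Summable e := by
    have := hsum2.mul_left C
    simpa [he, mul_assoc] using this
  set P : ℕ → ℝ := fun k => ∑ j ∈ Finset.range k, e j with hP
  set t : ℕ → ℝ := fun k => s k - P k with ht
  have htanti : Antitone t := by
    apply antitone_nat_of_succ_le
    intro k
    have := hrec k
    simp only [ht, hP, Finset.sum_range_succ]
    simp only [he] at this ⊢
    linarith
  have hPle : ∀ k, P k ≤ ∑' j, e j := fun k => Summable.sum_le_tsum _ (fun j _ => henn j) hesum
  have hbdd : BddBelow (Set.range t) := by
    refine ⟨-∑' j, e j, ?_⟩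
    rintro x ⟨k, rfl⟩
    have := hs k
    have := hPle k
    simp only [ht]
    linarith
  have htlim : Tendsto t atTop (𝓝 (⨅ k, t k)) := tendsto_atTop_ciInf htanti hbdd
  have hPlim : Tendsto P atTop (𝓝 (∑' j, e j)) := hesum.hasSum.tendsto_sum_nat
  have hslim : Tendsto s atTop (𝓝 ((⨅ k, t k) + ∑' j, e j)) := by
    have := htlim.add hPlim
    convert this using 2 with k
    simp [ht]
  set L := (⨅ k, t k) + ∑' j, e j with hL
  have hL0 : 0 ≤ L := ge_of_tendsto' hslim hs
  rcases eq_or_lt_of_le hL0 with h | h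
  · rwa [← h] at hslim
  · exfalso
    obtain ⟨N, hN⟩ := (hslim.eventually (eventually_ge_nhds (by linarith : L/2 < L))).exists_forall_of_atTop
    apply hdiv
    rw [← summable_nat_add_iff N]
    have hshift : Summable (fun k => (2/L) * (α (k+N) * s (k+N))) :=
      (((summable_nat_add_iff N).mpr hαs).mul_left _)
    refine Summable.of_nonneg_of_le (fun k => (hα (k+N)).1.le) (fun k => ?_) hshift
    have hsk : L/2 ≤ s (k+N) := hN (k+N) (Nat.le_add_left _ _)
    have hαk := (hα (k+N)).1
    have : α (k+N) * (L/2) ≤ α (k+N) * s (k+N) := by nlinarith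
    rw [div_mul_eq_mul_div, le_div_iff₀ (by linarith : (0:ℝ) < L)]
    nlinarith
end

section
/- Let H be a real Hilbert space and T : H → H nonexpansive. Suppose a sequence {y_k} in H is bounded, y_k ⇀ y (weak convergence), and ‖T(y_k) − y_k‖ → 0. Then y ∈ Fix(T). -/
/-! Expanding squares, `‖y_k - T ŷ‖² - ‖y_k - ŷ‖² = ‖ŷ - T ŷ‖² + 2⟪y_k - ŷ, ŷ - T ŷ⟫`, and the
inner product tends to `0` by weak convergence. On the other hand nonexpansiveness gives
`‖y_k - T ŷ‖ ≤ ‖T y_k - y_k‖ + ‖y_k - ŷ‖`, so the same difference is at most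
`‖T y_k - y_k‖ (‖T y_k - y_k‖ + 2‖y_k - ŷ‖)`, which tends to `0` because `(y_k)` is bounded.
Hence `‖ŷ - T ŷ‖² ≤ 0`. -/

open Filter Topology
open scoped RealInnerProductSpace

section

variable {H : Type*} [NormedAddCommGroup H]

theorem norm_sub_apply_sq_sub_le {T : H → H} (hT : ∀ x z : H, ‖T x - T z‖ ≤ ‖x - z‖)
    (x z : H) :
    ‖x - T z‖ ^ 2 - ‖x - z‖ ^ 2 ≤ ‖T x - x‖ * (‖T x - x‖ + 2 * ‖x - z‖) := by
  have htri : ‖x - T z‖ ≤ ‖T x - x‖ + ‖x - z‖ :=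
    calc ‖x - T z‖ = ‖(x - T x) + (T x - T z)‖ := by rw [sub_add_sub_cancel]
      _ ≤ ‖x - T x‖ + ‖T x - T z‖ := norm_add_le _ _
      _ ≤ ‖T x - x‖ + ‖x - z‖ := by rw [norm_sub_rev x]; gcongr; exact hT x z
  have hsq : ‖x - T z‖ ^ 2 ≤ (‖T x - x‖ + ‖x - z‖) ^ 2 := by gcongr
  nlinarith

variable [InnerProductSpace ℝ H]

theorem norm_sub_sq_sub_norm_sub_sq (x w z : H) :
    ‖x - z‖ ^ 2 - ‖x - w‖ ^ 2 = ‖w - z‖ ^ 2 + 2 * ⟪x - w, w - z⟫ := by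
  rw [← sub_add_sub_cancel x w z, norm_add_sq_real]
  ring

theorem tendsto_inner_sub_zero {y : ℕ → H} {ylim : H}
    (hweak : ∀ u : H, Tendsto (fun k => ⟪y k, u⟫) atTop (𝓝 ⟪ylim, u⟫)) (u : H) :
    Tendsto (fun k => ⟪y k - ylim, u⟫) atTop (𝓝 0) := by
  simp_rw [inner_sub_left]
  simpa using (hweak u).sub_const ⟪ylim, u⟫

end

theorem stmt17_general {H : Type*} [NormedAddCommGroup H] [InnerProductSpace ℝ H]
    (T : H → H) (hT : ∀ x z : H, ‖T x - T z‖ ≤ ‖x - z‖)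
    (y : ℕ → H) (ylim : H)
    (hbdd : ∃ M : ℝ, ∀ k, ‖y k‖ ≤ M)
    (hweak : ∀ u : H, Tendsto (fun k => ⟪y k, u⟫) atTop (𝓝 ⟪ylim, u⟫))
    (hres : Tendsto (fun k => ‖T (y k) - y k‖) atTop (𝓝 0)) :
    T ylim = ylim := by
  obtain ⟨M, hM⟩ := hbdd
  have hlim : Tendsto (fun k => ‖y k - T ylim‖ ^ 2 - ‖y k - ylim‖ ^ 2) atTop
      (𝓝 (‖ylim - T ylim‖ ^ 2)) := by
    simp_rw [norm_sub_sq_sub_norm_sub_sq _ ylim]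
    simpa using ((tendsto_inner_sub_zero hweak (ylim - T ylim)).const_mul 2).const_add _
  have hupper : Tendsto (fun k => ‖T (y k) - y k‖ * (‖T (y k) - y k‖ + 2 * (M + ‖ylim‖)))
      atTop (𝓝 0) := by
    simpa using hres.mul (hres.add_const _)
  have hle : ∀ k, ‖y k - T ylim‖ ^ 2 - ‖y k - ylim‖ ^ 2
      ≤ ‖T (y k) - y k‖ * (‖T (y k) - y k‖ + 2 * (M + ‖ylim‖)) := fun k =>
    (norm_sub_apply_sq_sub_le hT (y k) ylim).trans <| by
      gcongr
      exact (norm_sub_le _ _).trans (by linarith [hM k])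
  have hsq : ‖ylim - T ylim‖ ^ 2 = 0 :=
    le_antisymm (le_of_tendsto_of_tendsto' hlim hupper hle) (sq_nonneg _)
  simpa [sub_eq_zero, eq_comm] using hsq

theorem stmt17 {H : Type*} [NormedAddCommGroup H] [InnerProductSpace ℝ H] [CompleteSpace H]
    (T : H → H) (hT : ∀ x z : H, ‖T x - T z‖ ≤ ‖x - z‖)
    (y : ℕ → H) (ylim : H)
    (hbdd : ∃ M : ℝ, ∀ k, ‖y k‖ ≤ M)
    (hweak : ∀ u : H, Tendsto (fun k => ⟪y k, u⟫) atTop (𝓝 ⟪ylim, u⟫))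
    (hres : Tendsto (fun k => ‖T (y k) - y k‖) atTop (𝓝 0)) :
    T ylim = ylim :=
  stmt17_general T hT y ylim hbdd hweak hres
end
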